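/- Let Γ be a RAACH with defining graph (H,m) and G = Cay(Γ,S). If a, b, c ∈ Γ are such that e, a, b, c are pairwise distinct and e ∼ a, a ∼ b, b ∼ c, c ∼ e in G (a 4-cycle containing the identity e), then either there exists s ∈ S* with ord(s) = 4 and (a, b, c) = (s, s², s³), or there exist commuting s, t ∈ S* with t ∉ {s, s⁻¹} and (a, b, c) = (s, st, t). -/

import Mathlib

set_option linter.unusedVariables false

attribute [local instance] Classical.propDecidable

/-- The Cayley graph of a group `G` with respect to a connecting set `T`
(assumed closed under inversion, e.g. a symmetrized generating set). -/
def cayley (G : Type*) [Group G] (T : Set G) : SimpleGraph G where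
  Adj x y := x ≠ y ∧ (x⁻¹ * y ∈ T ∨ y⁻¹ * x ∈ T)
  symm := ⟨fun x y h => ⟨h.1.symm, h.2.symm⟩⟩
  loopless := ⟨fun x h => h.1 rfl⟩

open scoped commutatorElement

/-- The defining relators of a Right Angled Artin-Coxeter Hybrid: `s ^ (m s) = 1` for every
generator `s` with finite order prescription `m s`, and commutators for edges of `H`. -/
def raachRels {S : Type*} (H : SimpleGraph S) (m : S → ℕ∞) : Set (FreeGroup S) :=
  {r | ∃ (s : S) (k : ℕ), m s = (k : ℕ∞) ∧ r = FreeGroup.of s ^ k} ∪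
  {r | ∃ s t : S, H.Adj s t ∧ r = ⁅FreeGroup.of s, FreeGroup.of t⁆}

/-- The Right Angled Artin-Coxeter Hybrid with defining graph `(H, m)`. -/
abbrev RAACH {S : Type*} (H : SimpleGraph S) (m : S → ℕ∞) : Type _ :=
  PresentedGroup (raachRels H m)

/-- The generator of a RAACH corresponding to `s : S`. -/
def raachGen {S : Type*} (H : SimpleGraph S) (m : S → ℕ∞) (s : S) : RAACH H m :=
  PresentedGroup.of s

/-- The symmetrized generating set `S* = {s, s⁻¹ | s ∈ S}` inside the RAACH. -/
def Sstar {S : Type*} (H : SimpleGraph S) (m : S → ℕ∞) : Set (RAACH H m) :=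
  {g | ∃ s : S, g = raachGen H m s ∨ g = (raachGen H m s)⁻¹}

/-- The Cayley graph `Cay(Γ, S)` of the RAACH `Γ` with defining graph `(H, m)`. -/
def cayRAACH {S : Type*} (H : SimpleGraph S) (m : S → ℕ∞) : SimpleGraph (RAACH H m) :=
  cayley (RAACH H m) (Sstar H m)

/-!
A 4-cycle `e, a, b, c` is a relation `u₁ u₂ u₃ u₄ = e` between letters `uᵢ ∈ {xᵢ, xᵢ⁻¹}` of `S*`.
For each generator `x`, the exponent sum of `x` modulo `m x` (an integer when `m x = ∞`) is a
homomorphism on `Γ`, and it is injective on `⟨x⟩`, so `ord x = m x`. As `m x ≠ 1`, no generator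
occurs exactly once in the relation, and the letters pair up. All four on one generator forces
`u₁ = u₂ = u₃ = u₄ = s` with `s² ≠ e = s⁴`. The patterns `x x y y` and `x y y x` force `b = e`
and `a = c`. The pattern `x y x y` forces `u₃ = u₁⁻¹` and `u₄ = u₂⁻¹`: a commuting square.
-/

lemma mul_mul_mul_eq_one_rotate {G : Type*} [Group G] {u₁ u₂ u₃ u₄ : G}
    (h : u₁ * u₂ * u₃ * u₄ = 1) : u₂ * u₃ * u₄ * u₁ = 1 := by
  rw [mul_assoc, mul_assoc, mul_eq_one_comm] at h
  simpa only [mul_assoc] using h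

lemma orderOf_eq_four_of_mem_pair {G : Type*} [Group G] {g u₁ u₂ u₃ u₄ : G}
    (h₁ : u₁ ∈ ({g, g⁻¹} : Set G)) (h₂ : u₂ ∈ ({g, g⁻¹} : Set G))
    (h₃ : u₃ ∈ ({g, g⁻¹} : Set G)) (h₄ : u₄ ∈ ({g, g⁻¹} : Set G))
    (h : u₁ * u₂ * u₃ * u₄ = 1) (h₁₂ : u₁ * u₂ ≠ 1) (h₂₃ : u₂ * u₃ ≠ 1) :
    orderOf u₁ = 4 ∧ u₂ = u₁ ∧ u₃ = u₁ := by
  have mem_pair : ∀ {v}, v ∈ ({g, g⁻¹} : Set G) → v = u₁ ∨ v = u₁⁻¹ := by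
    rintro v (rfl | rfl) <;> rcases h₁ with rfl | rfl <;> simp
  obtain rfl : u₂ = u₁ := (mem_pair h₂).resolve_right (by rintro rfl; simp at h₁₂)
  obtain rfl : u₃ = u₂ := (mem_pair h₃).resolve_right (by rintro rfl; simp at h₂₃)
  obtain rfl : u₄ = u₃ := (mem_pair h₄).resolve_right <| by
    rintro rfl
    exact h₁₂ (by simpa [mul_assoc] using h)
  have : Fact (Nat.Prime 2) := ⟨Nat.prime_two⟩
  refine ⟨(orderOf_eq_prime_pow (p := 2) (n := 1) ?_ ?_).trans (by norm_num), rfl, rfl⟩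
  · simpa [pow_two] using h₁₂
  · simpa [pow_succ, mul_assoc] using h

namespace RAACH

variable {S : Type} {H : SimpleGraph S} {m : S → ℕ∞}

lemma raachGen_pow_toNat (x : S) : raachGen H m x ^ (m x).toNat = 1 := by
  cases hx : m x with
  | top => simp
  | coe k =>
    simpa [raachGen, PresentedGroup.of] using
      PresentedGroup.one_of_mem (rels := raachRels H m) (Or.inl ⟨x, k, hx, rfl⟩)

/-- The exponent sum of the generator `x`, modulo `m x`;
for `m x = ⊤` the target is `ZMod 0 = ℤ`. -/
noncomputable def degree (x : S) : RAACH H m →* Multiplicative (ZMod (m x).toNat) :=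
  PresentedGroup.toGroup (f := fun y => Multiplicative.ofAdd (if y = x then 1 else 0)) <| by
    rintro r (⟨y, k, hk, rfl⟩ | ⟨y, z, -, rfl⟩)
    · by_cases hyx : y = x
      · subst hyx
        simpa [← ofAdd_nsmul] using (ZMod.natCast_eq_zero_iff _ _).mpr (by simp [hk])
      · simp [hyx]
    · simp [commutatorElement_eq_one_iff_commute, Commute.all]

lemma degree_raachGen_self (x : S) :
    degree x (raachGen H m x) = Multiplicative.ofAdd 1 := by
  simp [degree, raachGen]

lemma degree_raachGen_of_ne {x y : S} (h : y ≠ x) : degree x (raachGen H m y) = 1 := by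
  simp [degree, raachGen, h]

lemma orderOf_raachGen (x : S) : orderOf (raachGen H m x) = (m x).toNat := by
  refine Nat.dvd_antisymm (orderOf_dvd_of_pow_eq_one (raachGen_pow_toNat x)) ?_
  have h : degree x (raachGen H m x ^ orderOf (raachGen H m x)) = 1 := by
    rw [pow_orderOf_eq_one, map_one]
  rw [map_pow, degree_raachGen_self, ← ofAdd_nsmul, nsmul_one] at h
  exact (ZMod.natCast_eq_zero_iff _ _).mp h

lemma eq_one_of_mem_zpowers_of_degree_eq_one {x : S} {g : RAACH H m}
    (hg : g ∈ Subgroup.zpowers (raachGen H m x)) (h : degree x g = 1) : g = 1 := by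
  obtain ⟨k, rfl⟩ := Subgroup.mem_zpowers_iff.mp hg
  rw [map_zpow, degree_raachGen_self, ← ofAdd_zsmul, zsmul_one] at h
  rw [← orderOf_dvd_iff_zpow_eq_one, orderOf_raachGen]
  exact (ZMod.intCast_zmod_eq_zero_iff_dvd _ _).mp h

variable (H m) in
def letters (x : S) : Set (RAACH H m) := {raachGen H m x, (raachGen H m x)⁻¹}

lemma mem_Sstar_iff {g : RAACH H m} : g ∈ Sstar H m ↔ ∃ x, g ∈ letters H m x := by
  simp [Sstar, letters]

lemma inv_mem_letters {x : S} {g : RAACH H m} (hg : g ∈ letters H m x) :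
    g⁻¹ ∈ letters H m x := by
  rcases hg with rfl | rfl <;> simp [letters]

lemma mem_Sstar_of_adj {g h : RAACH H m} (hgh : (cayRAACH H m).Adj g h) :
    g⁻¹ * h ∈ Sstar H m := by
  obtain hgh | hhg := hgh.2
  · exact hgh
  · obtain ⟨x, hx⟩ := mem_Sstar_iff.mp hhg
    exact mem_Sstar_iff.mpr ⟨x, by simpa using inv_mem_letters hx⟩

lemma mem_zpowers_of_mem_letters {x : S} {g : RAACH H m} (hg : g ∈ letters H m x) :
    g ∈ Subgroup.zpowers (raachGen H m x) := by
  rcases hg with rfl | rfl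
  exacts [Subgroup.mem_zpowers _, inv_mem (Subgroup.mem_zpowers _)]

lemma degree_eq_one_of_mem_letters {x y : S} (hxy : y ≠ x) {g : RAACH H m}
    (hg : g ∈ letters H m y) : degree x g = 1 := by
  rcases hg with rfl | rfl <;> simp [degree_raachGen_of_ne hxy]

lemma ne_one_of_mem_letters {x : S} (hx : m x ≠ 1) {g : RAACH H m} (hg : g ∈ letters H m x) :
    g ≠ 1 := by
  have hgen : raachGen H m x ≠ 1 := by
    rw [Ne, ← orderOf_eq_one_iff, orderOf_raachGen, ENat.toNat_eq_iff one_ne_zero]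
    exact_mod_cast hx
  rcases hg with rfl | rfl <;> simpa using hgen

lemma ne_of_mem_letters_of_ne {x y : S} (hx : m x ≠ 1) (hxy : y ≠ x) {g h : RAACH H m}
    (hg : g ∈ letters H m x) (hh : h ∈ letters H m y) : h ≠ g ∧ h ≠ g⁻¹ := by
  have hdeg := degree_eq_one_of_mem_letters hxy hh
  constructor <;> rintro rfl <;> apply ne_one_of_mem_letters hx hg
  · exact eq_one_of_mem_zpowers_of_degree_eq_one (mem_zpowers_of_mem_letters hg) hdeg
  · exact eq_one_of_mem_zpowers_of_degree_eq_one (mem_zpowers_of_mem_letters hg)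
      (by simpa using hdeg)

section FourLetters

variable {x₁ x₂ x₃ x₄ : S} {u₁ u₂ u₃ u₄ : RAACH H m}
  (h₁ : u₁ ∈ letters H m x₁) (h₂ : u₂ ∈ letters H m x₂)
  (h₃ : u₃ ∈ letters H m x₃) (h₄ : u₄ ∈ letters H m x₄) (h : u₁ * u₂ * u₃ * u₄ = 1)
include h₁ h₂ h₃ h₄ h

lemma letter_eq_of_prod_eq_one (hx₁ : m x₁ ≠ 1) : x₂ = x₁ ∨ x₃ = x₁ ∨ x₄ = x₁ := by
  by_contra! hne
  obtain ⟨e₂, e₃, e₄⟩ := hne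
  refine ne_one_of_mem_letters hx₁ h₁
    (eq_one_of_mem_zpowers_of_degree_eq_one (mem_zpowers_of_mem_letters h₁) ?_)
  simpa [degree_eq_one_of_mem_letters e₂ h₂, degree_eq_one_of_mem_letters e₃ h₃,
    degree_eq_one_of_mem_letters e₄ h₄] using congrArg (degree x₁) h

lemma mul_eq_one_of_adjacent_letters (e₂ : x₂ = x₁) (e₃ : x₃ ≠ x₁) (e₄ : x₄ ≠ x₁) :
    u₁ * u₂ = 1 := by
  subst e₂
  refine eq_one_of_mem_zpowers_of_degree_eq_one
    (mul_mem (mem_zpowers_of_mem_letters h₁) (mem_zpowers_of_mem_letters h₂)) ?_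
  simpa [degree_eq_one_of_mem_letters e₃ h₃, degree_eq_one_of_mem_letters e₄ h₄]
    using congrArg (degree x₂) h

lemma mul_eq_one_of_interleaved_letters (e₂ : x₂ ≠ x₁) (e₃ : x₃ = x₁) (e₄ : x₄ ≠ x₁) :
    u₁ * u₃ = 1 := by
  subst e₃
  refine eq_one_of_mem_zpowers_of_degree_eq_one
    (mul_mem (mem_zpowers_of_mem_letters h₁) (mem_zpowers_of_mem_letters h₃)) ?_
  simpa [degree_eq_one_of_mem_letters e₂ h₂, degree_eq_one_of_mem_letters e₄ h₄]
    using congrArg (degree x₃) h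

theorem four_letters_prod_eq_one_cases (hm : ∀ x, m x ≠ 1) (h₁₂ : u₁ * u₂ ≠ 1) (h₂₃ : u₂ * u₃ ≠ 1) :
    (orderOf u₁ = 4 ∧ u₂ = u₁ ∧ u₃ = u₁) ∨
      (Commute u₁ u₂ ∧ u₂ ≠ u₁ ∧ u₂ ≠ u₁⁻¹ ∧ u₃ = u₁⁻¹) := by
  have h' := mul_mul_mul_eq_one_rotate h
  have h'' := mul_mul_mul_eq_one_rotate h'
  have p₁ := letter_eq_of_prod_eq_one h₁ h₂ h₃ h₄ h (hm x₁)
  have p₂ := letter_eq_of_prod_eq_one h₂ h₃ h₄ h₁ h' (hm x₂)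
  have p₃ := letter_eq_of_prod_eq_one h₃ h₄ h₁ h₂ h'' (hm x₃)
  have p₄ := letter_eq_of_prod_eq_one h₄ h₁ h₂ h₃ (mul_mul_mul_eq_one_rotate h'') (hm x₄)
  by_cases e₂ : x₂ = x₁
  · by_cases e₃ : x₃ = x₁
    · obtain rfl : x₄ = x₁ := by grind
      subst e₂ e₃
      exact Or.inl (orderOf_eq_four_of_mem_pair h₁ h₂ h₃ h₄ h h₁₂ h₂₃)
    · exact absurd (mul_eq_one_of_adjacent_letters h₁ h₂ h₃ h₄ h e₂ e₃ (by grind)) h₁₂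
  · by_cases e₃ : x₃ = x₁
    · have h₁₃ := mul_eq_one_of_interleaved_letters h₁ h₂ h₃ h₄ h e₂ e₃ (by grind)
      have h₂₄ := mul_eq_one_of_interleaved_letters h₂ h₃ h₄ h₁ h' (by grind) (by grind)
        (Ne.symm e₂)
      obtain rfl := eq_inv_of_mul_eq_one_right h₁₃
      obtain rfl := eq_inv_of_mul_eq_one_right h₂₄
      obtain ⟨hne, hne'⟩ := ne_of_mem_letters_of_ne (hm x₁) e₂ h₁ h₂
      exact Or.inr ⟨commutatorElement_eq_one_iff_commute.mp (by rwa [commutatorElement_def]),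
        hne, hne', rfl⟩
    · exact absurd (mul_eq_one_of_adjacent_letters h₂ h₃ h₄ h₁ h' (by grind) (by grind)
      (Ne.symm e₂)) h₂₃

end FourLetters

end RAACH

open RAACH in
theorem raach_four_cycles_general {S : Type} (H : SimpleGraph S) (m : S → ℕ∞)
    (hm : ∀ s, m s = 2 ∨ m s = 3 ∨ m s = 4 ∨ m s = (⊤ : ℕ∞))
    (a b c : RAACH H m) (hb : b ≠ 1) (hac : a ≠ c)
    (h1 : (cayRAACH H m).Adj 1 a) (h2 : (cayRAACH H m).Adj a b)
    (h3 : (cayRAACH H m).Adj b c) (h4 : (cayRAACH H m).Adj c 1) :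
    (∃ s ∈ Sstar H m, orderOf s = 4 ∧ a = s ∧ b = s ^ 2 ∧ c = s ^ 3) ∨
    (∃ s ∈ Sstar H m, ∃ t ∈ Sstar H m,
      Commute s t ∧ t ≠ s ∧ t ≠ s⁻¹ ∧ a = s ∧ b = s * t ∧ c = t) := by
  have hm₁ : ∀ x, m x ≠ 1 := fun x => by rcases hm x with h | h | h | h <;> simp [h]
  have ha : a ∈ Sstar H m := by simpa using mem_Sstar_of_adj h1
  have hc : c⁻¹ ∈ Sstar H m := by simpa using mem_Sstar_of_adj h4
  obtain ⟨x₁, ha'⟩ := mem_Sstar_iff.mp ha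
  obtain ⟨x₂, hu₂⟩ := mem_Sstar_iff.mp (mem_Sstar_of_adj h2)
  obtain ⟨x₃, hu₃⟩ := mem_Sstar_iff.mp (mem_Sstar_of_adj h3)
  obtain ⟨x₄, hu₄⟩ := mem_Sstar_iff.mp hc
  rcases four_letters_prod_eq_one_cases ha' hu₂ hu₃ hu₄ (by group) hm₁ (by simpa using hb)
    (by simpa [inv_mul_eq_one] using hac) with ⟨ho, h₂, h₃⟩ | ⟨hcomm, hne, hne', h₃⟩
  · obtain rfl := inv_mul_eq_iff_eq_mul.mp h₂
    obtain rfl := inv_mul_eq_iff_eq_mul.mp h₃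
    exact Or.inl ⟨a, ha, ho, rfl, (sq a).symm, (pow_three' a).symm⟩
  · obtain rfl := inv_mul_eq_iff_eq_mul.mp h₃
    refine Or.inr ⟨a, ha, a⁻¹ * b, mem_Sstar_iff.mpr ⟨x₂, hu₂⟩, hcomm, hne, hne', rfl,
      by group, ?_⟩
    rw [mul_inv_eq_iff_eq_mul]
    simpa [mul_assoc] using hcomm.eq

/-- **Squares in the Cayley graph of a RAACH.** Any 4-cycle through the identity is either of
the form `e, s, s², s³` with `s ∈ S*` of order 4, or of the form `e, s, st, t` with commuting
`s, t ∈ S*`, `t ∉ {s, s⁻¹}`. -/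
theorem raach_four_cycles {S : Type} [Fintype S] (H : SimpleGraph S) (m : S → ℕ∞)
    (hm : ∀ s, m s = 2 ∨ m s = 3 ∨ m s = 4 ∨ m s = (⊤ : ℕ∞))
    (a b c : RAACH H m) (hb : b ≠ 1) (hac : a ≠ c)
    (h1 : (cayRAACH H m).Adj 1 a) (h2 : (cayRAACH H m).Adj a b)
    (h3 : (cayRAACH H m).Adj b c) (h4 : (cayRAACH H m).Adj c 1) :
    (∃ s ∈ Sstar H m, orderOf s = 4 ∧ a = s ∧ b = s ^ 2 ∧ c = s ^ 3) ∨
    (∃ s ∈ Sstar H m, ∃ t ∈ Sstar H m,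
      Commute s t ∧ t ≠ s ∧ t ≠ s⁻¹ ∧ a = s ∧ b = s * t ∧ c = t) :=
  raach_four_cycles_general H m hm a b c hb hac h1 h2 h3 h4
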